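/- Let U be a free ultrafilter on ℕ and (A n) a sequence of unital complex C*-algebras. Let w ∈ ∏_U A n be a partial isometry (w w* w = w), and let p, p' ∈ ℓ∞(A) be projections such that w* w ≤ π(p) and w w* ≤ π(p'). Then there exists a partial isometry v ∈ ℓ∞(A) (v v* v = v) with π(v) = w, v* v ≤ p, and v v* ≤ p'. -/

import Mathlib

open Filter Topology ENNReal

noncomputable section

section UltraCStar

variable (U : Ultrafilter ℕ) (A : ℕ → Type*) [∀ n, CStarAlgebra (A n)] [∀ n, Nontrivial (A n)]

/-- The limit along the ultrafilter `U` of the sequence of norms of `x ∈ ℓ∞(A)`. -/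
def ulim (x : lp A ∞) : ℝ := limUnder (U : Filter ℕ) fun n => ‖x n‖

variable {U A}

theorem exists_tendsto_norm (x : lp A ∞) :
    ∃ r : ℝ, Tendsto (fun n => ‖x n‖) (U : Filter ℕ) (𝓝 r) := by
  obtain ⟨C, hC⟩ := (lp.memℓp x).bddAbove
  have h : (↑(U.map fun n => ‖x n‖) : Filter ℝ) ≤ 𝓟 (Set.Icc 0 C) := by
    rw [Ultrafilter.coe_map, le_principal_iff, mem_map]
    exact univ_mem' fun n => ⟨norm_nonneg _, hC ⟨n, rfl⟩⟩
  obtain ⟨r, -, hr⟩ := isCompact_Icc.ultrafilter_le_nhds (U.map fun n => ‖x n‖) h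
  exact ⟨r, by rwa [Ultrafilter.coe_map] at hr⟩

theorem tendsto_ulim (x : lp A ∞) :
    Tendsto (fun n => ‖x n‖) (U : Filter ℕ) (𝓝 (ulim U A x)) :=
  tendsto_nhds_limUnder (exists_tendsto_norm x)

theorem ulim_eq {x : lp A ∞} {r : ℝ}
    (h : Tendsto (fun n => ‖x n‖) (U : Filter ℕ) (𝓝 r)) : ulim U A x = r :=
  tendsto_nhds_unique (tendsto_ulim x) h

theorem ulim_zero : ulim U A 0 = 0 :=
  ulim_eq <| by
    have : ∀ n, ‖(0 : lp A ∞) n‖ = (0 : ℝ) := fun n => by simp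
    simpa [this] using tendsto_const_nhds

theorem ulim_neg (x : lp A ∞) : ulim U A (-x) = ulim U A x :=
  ulim_eq <| (tendsto_ulim x).congr fun n => by simp

theorem ulim_add_le (x y : lp A ∞) : ulim U A (x + y) ≤ ulim U A x + ulim U A y := by
  refine le_of_tendsto_of_tendsto' (tendsto_ulim (x + y))
    ((tendsto_ulim x).add (tendsto_ulim y)) fun n => ?_
  calc ‖(x + y) n‖ = ‖x n + y n‖ := by simp
    _ ≤ ‖x n‖ + ‖y n‖ := norm_add_le _ _

theorem ulim_mul_le (x y : lp A ∞) : ulim U A (x * y) ≤ ulim U A x * ulim U A y := by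
  refine le_of_tendsto_of_tendsto' (tendsto_ulim (x * y))
    ((tendsto_ulim x).mul (tendsto_ulim y)) fun n => ?_
  calc ‖(x * y) n‖ = ‖x n * y n‖ := by simp
    _ ≤ ‖x n‖ * ‖y n‖ := norm_mul_le _ _

theorem ulim_smul (c : ℂ) (x : lp A ∞) : ulim U A (c • x) = ‖c‖ * ulim U A x :=
  ulim_eq <| ((tendsto_ulim x).const_mul ‖c‖).congr fun n => by
    simp [norm_smul]

theorem ulim_star (x : lp A ∞) : ulim U A (star x) = ulim U A x :=
  ulim_eq <| (tendsto_ulim x).congr fun n => by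
    simp [lp.coeFn_star]

variable (U A)

/-- The additive seminorm `x ↦ lim_U ‖x n‖` on `ℓ∞(A)`. -/
def upAddSeminorm : AddGroupSeminorm (lp A ∞) where
  toFun := ulim U A
  map_zero' := ulim_zero
  add_le' := ulim_add_le
  neg' := ulim_neg

/-- Type synonym of `ℓ∞(A)` carrying the seminorm `x ↦ lim_U ‖x n‖`. -/
def PreUP (_U : Ultrafilter ℕ) (A : ℕ → Type*) [∀ n, CStarAlgebra (A n)] : Type _ := lp A ∞

/-- The identity map `ℓ∞(A) → PreUP U A`. -/
def toPre : lp A ∞ → PreUP U A := id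

instance : Ring (PreUP U A) := (inferInstance : Ring (lp A ∞))

instance : StarRing (PreUP U A) := (inferInstance : StarRing (lp A ∞))

instance : SeminormedRing (PreUP U A) :=
  { (upAddSeminorm U A).toSeminormedAddCommGroup,
    (inferInstance : Ring (lp A ∞)) with
    norm_mul_le := ulim_mul_le }

instance : NormedAlgebra ℂ (PreUP U A) :=
  { (inferInstance : Algebra ℂ (lp A ∞)) with
    norm_smul_le := fun c x => le_of_eq (ulim_smul c x) }

instance : NormedStarGroup (PreUP U A) := ⟨fun x => (ulim_star x).le⟩

/-- The ultraproduct `∏_U A n`, realized as the separation quotient of `ℓ∞(A)`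
equipped with the seminorm `x ↦ lim_U ‖x n‖`. -/
abbrev UProd : Type _ := SeparationQuotient (PreUP U A)

instance : Star (SeparationQuotient (PreUP U A)) where
  star := SeparationQuotient.lift
    (fun x : PreUP U A => SeparationQuotient.mk (star x)) fun x y h => by
      try dsimp only
      refine SeparationQuotient.mk_eq_mk.2 ?_
      rw [Metric.inseparable_iff, dist_eq_norm] at h ⊢
      rwa [← star_sub, norm_star]

theorem mk_star (x : PreUP U A) :
    (SeparationQuotient.mk (star x) : UProd U A) = star (SeparationQuotient.mk x) := rfl

instance : StarRing (SeparationQuotient (PreUP U A)) where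
  star_involutive := by
    refine SeparationQuotient.surjective_mk.forall.2 fun x => ?_
    rw [← mk_star, ← mk_star, star_star]
  star_mul := by
    intro a b
    obtain ⟨x, rfl⟩ := SeparationQuotient.surjective_mk a
    obtain ⟨y, rfl⟩ := SeparationQuotient.surjective_mk b
    rw [← SeparationQuotient.mk_mul, ← mk_star, ← mk_star, ← mk_star,
      ← SeparationQuotient.mk_mul, star_mul]
  star_add := by
    intro a b
    obtain ⟨x, rfl⟩ := SeparationQuotient.surjective_mk a
    obtain ⟨y, rfl⟩ := SeparationQuotient.surjective_mk b
    rw [← SeparationQuotient.mk_add, ← mk_star, ← mk_star, ← mk_star,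
      ← SeparationQuotient.mk_add, star_add]

/-- The quotient map `π : ℓ∞(A) → ∏_U A n`. -/
def uproj (x : lp A ∞) : UProd U A := SeparationQuotient.mk (toPre U A x)

variable {U A}

theorem uproj_add (x y : lp A ∞) : uproj U A (x + y) = uproj U A x + uproj U A y := rfl

theorem uproj_mul (x y : lp A ∞) : uproj U A (x * y) = uproj U A x * uproj U A y := rfl

theorem uproj_star (x : lp A ∞) : uproj U A (star x) = star (uproj U A x) := rfl

theorem uproj_one : uproj U A 1 = 1 := rfl

theorem norm_uproj (x : lp A ∞) : ‖uproj U A x‖ = ulim U A x := rfl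

end UltraCStar

/-!
Lift `w` to some `x₀ ∈ ℓ∞(A)`. The inequalities `w⋆w ≤ π p` and `ww⋆ ≤ π p'` force
`w π(p) = w = π(p') w`, so the compression `x = p' x₀ p` still lifts `w`, and now `x p = x` and
`p' x = x` hold exactly. Since `w` is a partial isometry, `‖(x⋆x)² - x⋆x‖ → 0` coordinatewise along
`U`, so for `U`-most `n` the spectrum of `x_n⋆x_n` clusters near `{0, 1}`. There
`v_n = x_n f(x_n⋆x_n)`, with `f(t) = t^(-1/2)` near `1` and `f = 0` near `0`, is a partial isometry
(`t f(t)² ∈ {0, 1}` on the spectrum) with `‖v_n - x_n‖² ≤ 2‖(x_n⋆x_n)² - x_n⋆x_n‖`; elsewhere take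
`v_n = 0`. As `f(x⋆x)` commutes with `p`, `v` keeps `v p = v` and `p' v = v`, which give
`v⋆v ≤ p` and `vv⋆ ≤ p'`.
-/
/-- Continuous, and equal to `t ↦ t^(-1/2)` on `[3/4, ∞)` and to `0` on `(-∞, 1/4]`. -/
def polarCutoff (t : ℝ) : ℝ := min 1 (max 0 (4 * t - 1)) / √(max t (3 / 4))

@[fun_prop]
theorem continuous_polarCutoff : Continuous polarCutoff :=
  Continuous.div (by fun_prop) (by fun_prop) fun t =>
    (Real.sqrt_pos.2 (lt_max_of_lt_right (by norm_num))).ne'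

theorem polarCutoff_of_le {t : ℝ} (ht : t ≤ 1 / 4) : polarCutoff t = 0 := by
  simp [polarCutoff, max_eq_left (show 4 * t - 1 ≤ 0 by linarith)]

theorem polarCutoff_of_ge {t : ℝ} (ht : 3 / 4 ≤ t) : polarCutoff t = (√t)⁻¹ := by
  rw [polarCutoff, min_eq_left (le_max_of_le_right (by linarith)), max_eq_left ht, one_div]

theorem abs_polarCutoff_le (t : ℝ) : |polarCutoff t| ≤ 2 := by
  have hnum : min 1 (max 0 (4 * t - 1)) ∈ Set.Icc (0 : ℝ) 1 :=
    ⟨le_min zero_le_one (le_max_left _ _), min_le_left _ _⟩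
  have hden : (1 / 2 : ℝ) ≤ √(max t (3 / 4)) :=
    Real.le_sqrt_of_sq_le (by nlinarith [le_max_right t (3 / 4)])
  rw [polarCutoff, abs_of_nonneg (div_nonneg hnum.1 (Real.sqrt_nonneg _)),
    div_le_iff₀ (by linarith)]
  linarith [hnum.2]

theorem le_or_ge_of_abs_mul_self_sub_lt {t : ℝ} (ht : |t * t - t| < 1 / 16) :
    t ≤ 1 / 4 ∨ 3 / 4 ≤ t := by
  by_contra! h
  nlinarith [(abs_lt.1 ht).1, h.1, h.2]

theorem polarCutoff_eq_zero_or_mul_sq_eq_one {t : ℝ} (ht : |t * t - t| < 1 / 16) :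
    polarCutoff t = 0 ∨ t * polarCutoff t ^ 2 = 1 := by
  rcases le_or_ge_of_abs_mul_self_sub_lt ht with h | h
  · exact .inl (polarCutoff_of_le h)
  · right
    rw [polarCutoff_of_ge h, inv_pow, Real.sq_sqrt (by linarith), mul_inv_cancel₀ (by linarith)]

theorem abs_mul_polarCutoff_sub_one_sq_le {t : ℝ} (ht : |t * t - t| < 1 / 16) :
    |t * (polarCutoff t - 1) ^ 2| ≤ 2 * |t * t - t| := by
  rcases le_or_ge_of_abs_mul_self_sub_lt ht with h | h
  · have hfac : t * t - t = t * (t - 1) := by ring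
    have h1 : 3 / 4 ≤ |t - 1| := by rw [abs_sub_comm, abs_of_pos (by linarith)]; linarith
    rw [polarCutoff_of_le h, hfac, abs_mul, abs_mul, zero_sub, neg_one_sq, abs_one, mul_one]
    nlinarith [abs_nonneg t]
  · obtain ⟨s, hs, rfl⟩ : ∃ s, 0 < s ∧ t = s ^ 2 :=
      ⟨√t, Real.sqrt_pos.2 (by linarith), (Real.sq_sqrt (by linarith)).symm⟩
    have hs1 : |s - 1| ≤ 1 := by
      rw [abs_le]; constructor <;> nlinarith [(abs_lt.1 ht).2]
    have hsq : s ^ 2 * ((√(s ^ 2))⁻¹ - 1) ^ 2 = (s - 1) ^ 2 := by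
      rw [Real.sqrt_sq hs.le]; field_simp; ring
    have hfac : s ^ 2 * s ^ 2 - s ^ 2 = s ^ 2 * (s + 1) * (s - 1) := by ring
    rw [polarCutoff_of_ge h, hsq, hfac, abs_mul, abs_of_nonneg (sq_nonneg _),
      abs_of_pos (by positivity), ← sq_abs]
    have h2 : 1 ≤ 2 * (s ^ 2 * (s + 1)) := by nlinarith
    nlinarith [abs_nonneg (s - 1)]

def IsPartialIsometry {R : Type*} [Mul R] [Star R] (v : R) : Prop := v * star v * v = v

section PartialIsometry

variable {R : Type*} [Semigroup R] [StarMul R] {v : R}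

theorem IsPartialIsometry.eq (hv : IsPartialIsometry v) : v * star v * v = v := hv

theorem IsPartialIsometry.isStarProjection_star_mul_self (hv : IsPartialIsometry v) :
    IsStarProjection (star v * v) where
  isIdempotentElem := by
    rw [IsIdempotentElem, mul_assoc, ← mul_assoc v, hv.eq]
  isSelfAdjoint := .star_mul_self v

theorem IsPartialIsometry.isStarProjection_mul_star_self (hv : IsPartialIsometry v) :
    IsStarProjection (v * star v) where
  isIdempotentElem := by
    rw [IsIdempotentElem, ← mul_assoc, hv.eq]
  isSelfAdjoint := .mul_star_self v

end PartialIsometry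

theorem IsStarProjection.exists_sub_eq_star_mul_self {R : Type*} [NonUnitalNonAssocRing R]
    [StarRing R] {p q : R} (hq : IsStarProjection q) (hp : IsStarProjection p) (h : q * p = q) :
    ∃ z, p - q = star z * z := by
  have hpq := hq.sub_of_mul_eq_left hp h
  exact ⟨p - q, by rw [hpq.isSelfAdjoint.star_eq, hpq.isIdempotentElem.eq]⟩

section CStarAlgebra

variable {B : Type*} [CStarAlgebra B]

theorem abs_mul_self_sub_le_norm [Nontrivial B] {a : B} (ha : IsSelfAdjoint a) {t : ℝ}
    (ht : t ∈ spectrum ℝ a) : |t * t - t| ≤ ‖a * a - a‖ := by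
  have hmem : t * t - t ∈ spectrum ℝ (a * a - a) := by
    rw [← cfc_id' ℝ a, ← cfc_mul .., ← cfc_sub .., cfc_map_spectrum ..]
    exact ⟨t, ht, rfl⟩
  simpa using spectrum.norm_le_norm_of_mem hmem

theorem norm_sq_le_of_star_mul_self_add_eq {u m r : B} (h : star u * u + star m * m = r) :
    ‖u‖ ^ 2 ≤ ‖r‖ := by
  let _ := CStarAlgebra.spectralOrder B
  have _ := CStarAlgebra.spectralOrderedRing B
  rw [sq, ← CStarRing.norm_star_mul_self, ← h]
  exact CStarAlgebra.norm_le_norm_of_nonneg_of_le (star_mul_self_nonneg u)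
    (le_add_of_nonneg_right (star_mul_self_nonneg m))

theorem norm_mul_one_sub_sq_le {p : B} (hp : IsStarProjection p) (x c : B) :
    ‖x * (1 - p)‖ ^ 2 ≤ ‖p - star x * x - star c * c‖ := by
  have hq : IsStarProjection (1 - p) := hp.one_sub
  have hqpq : (1 - p) * p * (1 - p) = 0 := by rw [hp.one_sub_mul_self, zero_mul]
  generalize 1 - p = q at hq hqpq ⊢
  have hsum : star (x * q) * (x * q) + star (c * q) * (c * q)
      = -(q * (p - star x * x - star c * c) * q) := by
    rw [mul_sub, mul_sub, sub_mul, sub_mul, hqpq, star_mul, star_mul, hq.isSelfAdjoint.star_eq]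
    noncomm_ring
  calc ‖x * q‖ ^ 2 ≤ ‖q * (p - star x * x - star c * c) * q‖ := by
        simpa using norm_sq_le_of_star_mul_self_add_eq hsum
    _ ≤ ‖q‖ * ‖p - star x * x - star c * c‖ * ‖q‖ :=
        (norm_mul_le _ _).trans (mul_le_mul_of_nonneg_right (norm_mul_le _ _) (norm_nonneg _))
    _ ≤ 1 * ‖p - star x * x - star c * c‖ * 1 := by
        have := hq.norm_le
        gcongr
    _ = _ := by ring

theorem star_mul_mul_cfc_star_mul_self {g : ℝ → ℝ} (hg : Continuous g) (X : B) :
    star (X * cfc g (star X * X)) * (X * cfc g (star X * X))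
      = cfc (fun t => t * g t ^ 2) (star X * X) := by
  have hgs : star (cfc g (star X * X)) = cfc g (star X * X) := IsSelfAdjoint.cfc.star_eq
  calc star (X * cfc g (star X * X)) * (X * cfc g (star X * X))
      = cfc g (star X * X) * cfc (fun t => t) (star X * X) * cfc g (star X * X) := by
        rw [cfc_id' ℝ (star X * X), star_mul, hgs]; simp only [mul_assoc]
    _ = _ := by
        rw [← cfc_mul .., ← cfc_mul ..]
        exact cfc_congr fun t _ => by ring

/-- When `‖(X⋆X)² - X⋆X‖ < 1/16` the spectrum of `X⋆X` avoids `(1/4, 3/4)`; outside that regime the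
value `0` is just a convenient partial isometry. -/
def polarApprox (X : B) : B :=
  if ‖star X * X * (star X * X) - star X * X‖ < 1 / 16 then X * cfc polarCutoff (star X * X)
  else 0

variable {X : B}

theorem norm_polarApprox_le (X : B) : ‖polarApprox X‖ ≤ 2 * ‖X‖ := by
  unfold polarApprox
  split_ifs
  · calc ‖X * cfc polarCutoff (star X * X)‖ ≤ ‖X‖ * 2 :=
          (norm_mul_le _ _).trans <| mul_le_mul_of_nonneg_left
            (norm_cfc_le zero_le_two fun t _ => abs_polarCutoff_le t) (norm_nonneg _)
      _ = 2 * ‖X‖ := mul_comm _ _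
  · simp

theorem polarApprox_mul_of_mul_eq {P : B} (hP : IsSelfAdjoint P) (h : X * P = X) :
    polarApprox X * P = polarApprox X := by
  unfold polarApprox
  split_ifs
  · have hPX : P * star X = star X := by simpa [hP.star_eq] using congrArg star h
    have hcomm : Commute (star X * X) P := by
      rw [Commute, SemiconjBy, mul_assoc, h, ← mul_assoc, hPX]
    rw [mul_assoc, (hcomm.cfc_real polarCutoff).eq, ← mul_assoc, h]
  · simp

theorem mul_polarApprox_of_mul_eq {P : B} (h : P * X = X) : P * polarApprox X = polarApprox X := by
  unfold polarApprox
  split_ifs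
  · rw [← mul_assoc, h]
  · simp

variable [Nontrivial B]

theorem isPartialIsometry_polarApprox (X : B) : IsPartialIsometry (polarApprox X) := by
  unfold polarApprox
  split_ifs with hX
  · have hf : cfc (fun t => polarCutoff t * (t * polarCutoff t ^ 2)) (star X * X)
        = cfc polarCutoff (star X * X) := by
      refine cfc_congr fun t ht => ?_
      rcases polarCutoff_eq_zero_or_mul_sq_eq_one
        ((abs_mul_self_sub_le_norm (.star_mul_self X) ht).trans_lt hX) with h | h <;> simp [h]
    rw [IsPartialIsometry, mul_assoc, star_mul_mul_cfc_star_mul_self continuous_polarCutoff,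
      mul_assoc, ← cfc_mul .., hf]
  · simp [IsPartialIsometry]

theorem norm_polarApprox_sub_sq_le (hX : ‖star X * X * (star X * X) - star X * X‖ < 1 / 16) :
    ‖polarApprox X - X‖ ^ 2 ≤ 2 * ‖star X * X * (star X * X) - star X * X‖ := by
  have hsub : polarApprox X - X = X * cfc (fun t => polarCutoff t - 1) (star X * X) := by
    rw [polarApprox, if_pos hX, cfc_sub .., cfc_const_one .., mul_sub, mul_one]
  rw [hsub, sq, ← CStarRing.norm_star_mul_self,
    star_mul_mul_cfc_star_mul_self (by fun_prop)]
  exact norm_cfc_le (by positivity) fun t ht =>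
    have hle := abs_mul_self_sub_le_norm (.star_mul_self X) ht
    (abs_mul_polarCutoff_sub_one_sq_le (hle.trans_lt hX)).trans (by linarith)

end CStarAlgebra

section SequenceAlgebra

variable {A : ℕ → Type*} [∀ n, CStarAlgebra (A n)]

theorem isSelfAdjoint_lp_apply {p : lp A ∞} (hp : IsSelfAdjoint p) (n : ℕ) :
    IsSelfAdjoint (p n) :=
  (by simpa [lp.star_apply] using congrArg (· n) hp.star_eq : star (p n) = p n)

theorem isStarProjection_lp_apply {p : lp A ∞} (hp : IsStarProjection p) (n : ℕ) :
    IsStarProjection (p n) :=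
  ⟨(by simpa using congrArg (· n) hp.isIdempotentElem.eq : p n * p n = p n),
    isSelfAdjoint_lp_apply hp.isSelfAdjoint n⟩

def polarLift (x : lp A ∞) : lp A ∞ :=
  ⟨fun n => polarApprox (x n), memℓp_infty ⟨2 * ‖x‖, by
    rintro _ ⟨n, rfl⟩
    exact (norm_polarApprox_le _).trans
      (mul_le_mul_of_nonneg_left (lp.norm_apply_le_norm ENNReal.top_ne_zero x n) zero_le_two)⟩⟩

theorem polarLift_apply (x : lp A ∞) (n : ℕ) : polarLift x n = polarApprox (x n) := rfl

theorem polarLift_mul_of_mul_eq {x p : lp A ∞} (hp : IsSelfAdjoint p) (h : x * p = x) :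
    polarLift x * p = polarLift x := by
  ext n
  simpa [polarLift_apply] using
    polarApprox_mul_of_mul_eq (isSelfAdjoint_lp_apply hp n) (by simpa using congrArg (· n) h)

theorem mul_polarLift_of_mul_eq {x p : lp A ∞} (h : p * x = x) :
    p * polarLift x = polarLift x := by
  ext n
  simpa [polarLift_apply] using mul_polarApprox_of_mul_eq (by simpa using congrArg (· n) h)

variable [∀ n, Nontrivial (A n)]

theorem isPartialIsometry_polarLift (x : lp A ∞) : IsPartialIsometry (polarLift x) := by
  ext n
  simpa [lp.star_apply, polarLift_apply] using (isPartialIsometry_polarApprox (x n)).eq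

end SequenceAlgebra

section Ultraproduct

variable {U : Ultrafilter ℕ} {A : ℕ → Type*} [∀ n, CStarAlgebra (A n)] [∀ n, Nontrivial (A n)]

theorem uproj_surjective : Function.Surjective (uproj U A) := fun w =>
  let ⟨x, hx⟩ := SeparationQuotient.surjective_mk w
  ⟨x, hx⟩

theorem uproj_sub (x y : lp A ∞) : uproj U A (x - y) = uproj U A x - uproj U A y :=
  SeparationQuotient.mk_sub _ _

theorem uproj_eq_zero_iff {x : lp A ∞} :
    uproj U A x = 0 ↔ Tendsto (fun n => ‖x n‖) (U : Filter ℕ) (𝓝 0) := by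
  rw [← norm_eq_zero, norm_uproj]
  exact ⟨fun h => h ▸ tendsto_ulim x, ulim_eq⟩

theorem uproj_eq_zero_of_norm_sq_le {u r : lp A ∞} {C : ℝ}
    (h : ∀ᶠ n in (U : Filter ℕ), ‖u n‖ ^ 2 ≤ C * ‖r n‖) (hr : uproj U A r = 0) :
    uproj U A u = 0 := by
  rw [uproj_eq_zero_iff] at hr ⊢
  have hsq : Tendsto (fun n => ‖u n‖ ^ 2) (U : Filter ℕ) (𝓝 0) :=
    squeeze_zero' (.of_forall fun n => by positivity) h (by simpa using hr.const_mul C)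
  simpa using hsq.sqrt

theorem uproj_polarLift {x : lp A ∞}
    (hx : uproj U A (star x * x * (star x * x) - star x * x) = 0) :
    uproj U A (polarLift x) = uproj U A x := by
  rw [← sub_eq_zero, ← uproj_sub]
  have hsmall : ∀ᶠ n in (U : Filter ℕ), ‖(star x * x * (star x * x) - star x * x) n‖ < 1 / 16 :=
    uproj_eq_zero_iff.1 hx (Iio_mem_nhds (by norm_num))
  refine uproj_eq_zero_of_norm_sq_le (C := 2) (hsmall.mono fun n hn => ?_) hx
  simp only [lp.coeFn_sub, lp.infty_coeFn_mul, lp.star_apply, Pi.sub_apply, Pi.mul_apply,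
    polarLift_apply] at hn ⊢
  exact norm_polarApprox_sub_sq_le hn

theorem mul_uproj_of_sub_eq_star_mul_self {p : lp A ∞} (hp : IsStarProjection p) {w : UProd U A}
    (h : ∃ y : UProd U A, uproj U A p - star w * w = star y * y) : w * uproj U A p = w := by
  obtain ⟨y, hy⟩ := h
  obtain ⟨x, rfl⟩ := uproj_surjective w
  obtain ⟨c, rfl⟩ := uproj_surjective y
  have hr : uproj U A (p - star x * x - star c * c) = 0 := by
    rw [uproj_sub, uproj_sub, uproj_mul, uproj_mul, uproj_star, uproj_star, hy, sub_self]
  have hx : uproj U A (x * (1 - p)) = 0 :=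
    uproj_eq_zero_of_norm_sq_le (C := 1) (.of_forall fun n => by
      simp only [lp.coeFn_sub, lp.infty_coeFn_mul, lp.infty_coeFn_one, lp.star_apply,
        Pi.sub_apply, Pi.mul_apply, Pi.one_apply, one_mul]
      exact norm_mul_one_sub_sq_le (isStarProjection_lp_apply hp n) (x n) (c n)) hr
  rwa [uproj_mul, uproj_sub, uproj_one, mul_sub, mul_one, sub_eq_zero, eq_comm] at hx

theorem uproj_mul_of_sub_eq_mul_star_self {p : lp A ∞} (hp : IsStarProjection p) {w : UProd U A}
    (h : ∃ y : UProd U A, uproj U A p - w * star w = star y * y) : uproj U A p * w = w := by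
  have h' := congrArg star (mul_uproj_of_sub_eq_star_mul_self hp (w := star w) (by simpa using h))
  rwa [star_mul, star_star, ← uproj_star, hp.isSelfAdjoint.star_eq] at h'

end Ultraproduct

theorem stmt4_general (U : Ultrafilter ℕ)
    (A : ℕ → Type*) [∀ n, CStarAlgebra (A n)] [∀ n, Nontrivial (A n)]
    (w : UProd U A) (hw : w * star w * w = w)
    (p p' : lp A ∞)
    (hp_star : star p = p) (hp_idem : p * p = p)
    (hp'_star : star p' = p') (hp'_idem : p' * p' = p')
    (h_init : ∃ y : UProd U A, uproj U A p - star w * w = star y * y)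
    (h_fin : ∃ y : UProd U A, uproj U A p' - w * star w = star y * y) :
    ∃ v : lp A ∞, v * star v * v = v ∧ uproj U A v = w ∧
      (∃ z : lp A ∞, p - star v * v = star z * z) ∧
      (∃ z : lp A ∞, p' - v * star v = star z * z) := by
  have hp : IsStarProjection p := ⟨hp_idem, hp_star⟩
  have hp' : IsStarProjection p' := ⟨hp'_idem, hp'_star⟩
  obtain ⟨x₀, rfl⟩ := uproj_surjective w
  set x := p' * x₀ * p
  have hx : uproj U A x = uproj U A x₀ := by
    rw [uproj_mul, uproj_mul, mul_assoc, mul_uproj_of_sub_eq_star_mul_self hp h_init,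
      uproj_mul_of_sub_eq_mul_star_self hp' h_fin]
  have hxp : x * p = x := by rw [mul_assoc, hp_idem]
  have hp'x : p' * x = x := by simp only [x, ← mul_assoc, hp'_idem]
  have hv : IsPartialIsometry (polarLift x) := isPartialIsometry_polarLift x
  have hv_star : star (polarLift x) * p' = star (polarLift x) := by
    simpa [hp'_star] using congrArg star (mul_polarLift_of_mul_eq hp'x)
  refine ⟨polarLift x, hv.eq, ?_, ?_, ?_⟩
  · have hq := (show IsPartialIsometry (uproj U A x₀) from hw).isStarProjection_star_mul_self
    refine (uproj_polarLift ?_).trans hx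
    rw [uproj_sub, uproj_mul, uproj_mul, uproj_star, hx, hq.isIdempotentElem.eq, sub_self]
  · refine hv.isStarProjection_star_mul_self.exists_sub_eq_star_mul_self hp ?_
    rw [mul_assoc, polarLift_mul_of_mul_eq hp.isSelfAdjoint hxp]
  · refine hv.isStarProjection_mul_star_self.exists_sub_eq_star_mul_self hp' ?_
    rw [mul_assoc, hv_star]

/-- partial isometries lift from the ultraproduct to `ℓ∞(A)`, with control
of the initial and final projections.  Here `a ≤ b` for selfadjoint elements is expressed
by `∃ y, b - a = star y * y`. -/
theorem stmt4 (U : Ultrafilter ℕ) (hU : (U : Filter ℕ) ≤ Filter.cofinite)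
    (A : ℕ → Type*) [∀ n, CStarAlgebra (A n)] [∀ n, Nontrivial (A n)]
    (w : UProd U A) (hw : w * star w * w = w)
    (p p' : lp A ∞)
    (hp_star : star p = p) (hp_idem : p * p = p)
    (hp'_star : star p' = p') (hp'_idem : p' * p' = p')
    (h_init : ∃ y : UProd U A, uproj U A p - star w * w = star y * y)
    (h_fin : ∃ y : UProd U A, uproj U A p' - w * star w = star y * y) :
    ∃ v : lp A ∞, v * star v * v = v ∧ uproj U A v = w ∧
      (∃ z : lp A ∞, p - star v * v = star z * z) ∧
      (∃ z : lp A ∞, p' - v * star v = star z * z) :=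
  stmt4_general U A w hw p p' hp_star hp_idem hp'_star hp'_idem h_init h_fin
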